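/- There exists a family (T_A)_{A ⊆ ω} of well-founded trees, indexed by subsets of ω, such that distinct subsets A ≠ B give trees with T_A not ≈_{ω+1} T_B; in particular there are at least 2^{ℵ₀} pairwise ≈_{ω+1}-inequivalent countable well-founded trees. -/

import Mathlib

/-- A well-founded tree: a strict partial order with a minimum (the root),
in which the predecessors of any element are linearly ordered, and whose
order has no infinite ascending chains (the reverse order is well-founded). -/
structure WFTree : Type 1 where
  A : Type
  lt : A → A → Prop
  trans : ∀ {a b c : A}, lt a b → lt b c → lt a c
  irrefl : ∀ a : A, ¬ lt a a
  root : A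
  root_min : ∀ x : A, x ≠ root → lt root x
  pred_linear : ∀ {x y z : A}, lt x z → lt y z → (lt x y ∨ x = y ∨ lt y x)
  wf : WellFounded fun a b => lt b a

namespace WFTree

/-- `y` is an immediate successor of `x`. -/
def Succ (T : WFTree) (x y : T.A) : Prop :=
  T.lt x y ∧ ∀ z, T.lt x z → ¬ T.lt z y

/-- The depth `Dp_T(x)` of a vertex: `sup { Dp_T(y) + 1 : y an immediate successor of x }`. -/
noncomputable def dp (T : WFTree) : T.A → Ordinal :=
  T.wf.fix fun x ih => ⨆ y : {y // T.Succ x y}, ih y.1 y.2.1 + 1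

/-- The depth of the tree, `Dp(T) = Dp_T(rt(T))`. -/
noncomputable def Dp (T : WFTree) : Ordinal := T.dp T.root

/-- The subtree `T[x]` of all elements `≥ x`, with root `x`. -/
def subtree (T : WFTree) (x : T.A) : WFTree where
  A := {y // y = x ∨ T.lt x y}
  lt a b := T.lt a.1 b.1
  trans h1 h2 := T.trans h1 h2
  irrefl a := T.irrefl a.1
  root := ⟨x, Or.inl rfl⟩
  root_min := by
    rintro ⟨y, hy⟩ hne
    rcases hy with rfl | h
    · exact absurd rfl hne
    · exact h
  pred_linear := by
    intro a b c h1 h2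
    rcases T.pred_linear h1 h2 with h | h | h
    · exact Or.inl h
    · exact Or.inr (Or.inl (Subtype.ext h))
    · exact Or.inr (Or.inr h)
  wf := InvImage.wf Subtype.val T.wf

end WFTree

/-- The back-and-forth equivalence `T₁ ≈_α T₂` between well-founded trees, defined by
recursion on `α`: `T₁ ≈_0 T₂` always, and for `α ≠ 0`, `T₁ ≈_α T₂` iff for every `β < α`
every immediate successor of the root of `T₁` has a `≈_β`-partner among the immediate
successors of the root of `T₂`, and symmetrically. -/
def TreeEquiv (α : Ordinal) (T₁ T₂ : WFTree) : Prop :=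
  ∀ β : Ordinal, β < α →
    (∀ x₁, T₁.Succ T₁.root x₁ →
      ∃ x₂, T₂.Succ T₂.root x₂ ∧ TreeEquiv β (T₁.subtree x₁) (T₂.subtree x₂)) ∧
    (∀ x₂, T₂.Succ T₂.root x₂ →
      ∃ x₁, T₁.Succ T₁.root x₁ ∧ TreeEquiv β (T₂.subtree x₂) (T₁.subtree x₁))
termination_by α
decreasing_by all_goals assumption

/-!
Let `T_A` be the tree whose root has, for each `n ∈ A`, one child heading a chain of `n` further
vertices. The subtree below the child for `n` has height exactly `n`, and trees of different
finite heights `k < m` are separated by `≈_{k+1}`: the longer one can follow a branch of length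
`k + 1` which the shorter one cannot match. If `n ∈ A \ B`, the child for `n` in `T_A` then has no
`≈_ω`-partner among the children `m ≠ n` of the root of `T_B`, so `T_A ≉_{ω+1} T_B`.
-/

theorem TreeEquiv.symm {α : Ordinal} {T₁ T₂ : WFTree} (h : TreeEquiv α T₁ T₂) :
    TreeEquiv α T₂ T₁ := by
  rw [TreeEquiv] at h ⊢
  exact fun β hβ => (h β hβ).symm

namespace WFTree

variable {T : WFTree}

theorem mem_subtree_of_lt {x : T.A} (y : (T.subtree x).A) {z : T.A} (h : T.lt y.1 z) :
    z = x ∨ T.lt x z :=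
  Or.inr (y.2.elim (fun hyx => hyx ▸ h) (fun hxy => T.trans hxy h))

theorem succ_subtree_iff {x : T.A} (y z : (T.subtree x).A) :
    (T.subtree x).Succ y z ↔ T.Succ y.1 z.1 :=
  ⟨fun ⟨hyz, hmin⟩ => ⟨hyz, fun w hyw hwz => hmin ⟨w, mem_subtree_of_lt y hyw⟩ hyw hwz⟩,
    fun ⟨hyz, hmin⟩ => ⟨hyz, fun w => hmin w.1⟩⟩

def HeightLE (T : WFTree) : ℕ → T.A → Prop
  | 0, x => ∀ y, ¬ T.Succ x y
  | j + 1, x => ∀ y, T.Succ x y → HeightLE T j y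

def HasBranch (T : WFTree) : ℕ → T.A → Prop
  | 0, _ => True
  | j + 1, x => ∃ y, T.Succ x y ∧ HasBranch T j y

theorem HeightLE.subtree {x : T.A} :
    ∀ {j : ℕ} {y : (T.subtree x).A}, T.HeightLE j y.1 → (T.subtree x).HeightLE j y
  | 0, y, h => fun z hz => h z.1 ((succ_subtree_iff y z).1 hz)
  | _ + 1, y, h => fun z hz => (h z.1 ((succ_subtree_iff y z).1 hz)).subtree

theorem HasBranch.subtree {x : T.A} :
    ∀ {j : ℕ} {y : (T.subtree x).A}, T.HasBranch j y.1 → (T.subtree x).HasBranch j y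
  | 0, _, _ => trivial
  | _ + 1, y, ⟨z, hz, h⟩ =>
    ⟨⟨z, mem_subtree_of_lt y hz.1⟩, (succ_subtree_iff _ _).2 hz, h.subtree⟩

theorem heightLE_of_rank_le (rank : T.A → ℕ∞) (hrank : ∀ ⦃x y⦄, T.Succ x y → rank y < rank x) :
    ∀ {j : ℕ} {x : T.A}, rank x ≤ j → T.HeightLE j x
  | 0, x, hx => fun y hy => by simpa using (hrank hy).trans_le hx
  | j + 1, x, hx => fun y hy => heightLE_of_rank_le rank hrank <|
    ENat.lt_natCast_add_one_iff.1 (by push_cast at hx; exact (hrank hy).trans_le hx)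

end WFTree

open WFTree

theorem not_treeEquiv_of_hasBranch_of_heightLE {T T' : WFTree} {j : ℕ} {β : Ordinal}
    (hT : T.HasBranch (j + 1) T.root) (hT' : T'.HeightLE j T'.root) (hβ : (j : Ordinal) < β) :
    ¬ TreeEquiv β T T' := by
  induction j generalizing T T' β with
  | zero =>
    obtain ⟨x, hx, -⟩ := hT
    intro h
    rw [TreeEquiv] at h
    obtain ⟨x', hx', -⟩ := (h 0 (by simpa using hβ)).1 x hx
    exact hT' x' hx'
  | succ j ih =>
    obtain ⟨x, hx, hbranch⟩ := hT
    intro h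
    rw [TreeEquiv] at h
    obtain ⟨x', hx', hequiv⟩ := (h (j + 1) (by exact_mod_cast hβ)).1 x hx
    exact ih hbranch.subtree (hT' x' hx').subtree (by exact_mod_cast Nat.lt_succ_self j) hequiv

namespace ChainTree

@[ext]
structure Node (A : Set ℕ) where
  branch : ℕ
  level : ℕ
  mem : branch ∈ A
  le : level ≤ branch

variable {A : Set ℕ}

instance : Countable (Node A) :=
  Function.Injective.countable (f := fun p : Node A => (p.branch, p.level))
    fun _ _ h => Node.ext (Prod.ext_iff.1 h).1 (Prod.ext_iff.1 h).2

/-- `none` is the root; `some p` is vertex number `p.level` on the chain below the root's child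
`some ⟨n, 0, _, _⟩`, for `n = p.branch ∈ A`. -/
def lt : Option (Node A) → Option (Node A) → Prop
  | _, none => False
  | none, some _ => True
  | some p, some q => p.branch = q.branch ∧ p.level < q.level

def rank : Option (Node A) → ℕ∞
  | none => ⊤
  | some p => (p.branch - p.level : ℕ)

theorem rank_lt_of_lt : ∀ {x y : Option (Node A)}, lt x y → rank y < rank x
  | none, some _, _ => ENat.natCast_lt_top _
  | some _, some q, ⟨_, _⟩ => Nat.cast_lt.2 (by have := q.le; omega)

end ChainTree

open ChainTree in
def chainTree (A : Set ℕ) : WFTree where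
  A := Option (Node A)
  lt := ChainTree.lt
  trans := by
    rintro (_ | p) (_ | q) (_ | r) <;> simp only [ChainTree.lt] <;> try tauto
    exact fun ⟨hpq, hpq'⟩ ⟨hqr, hqr'⟩ => ⟨hpq.trans hqr, hpq'.trans hqr'⟩
  irrefl := by rintro (_ | p) <;> simp [ChainTree.lt]
  root := none
  root_min := by
    rintro (_ | p) h
    exacts [absurd rfl h, trivial]
  pred_linear := by
    rintro (_ | p) (_ | q) (_ | r) <;> simp only [ChainTree.lt] <;> try tauto
    rintro ⟨hpr, -⟩ ⟨hqr, -⟩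
    rcases lt_trichotomy p.level q.level with h | h | h
    exacts [Or.inl ⟨hpr.trans hqr.symm, h⟩,
      Or.inr (Or.inl (congrArg some (Node.ext (hpr.trans hqr.symm) h))),
      Or.inr (Or.inr ⟨hqr.trans hpr.symm, h⟩)]
  wf := Subrelation.wf (fun h => rank_lt_of_lt h) (InvImage.wf rank wellFounded_lt)

namespace ChainTree

variable {A : Set ℕ}

instance : Countable (chainTree A).A := inferInstanceAs (Countable (Option (Node A)))

theorem succ_root_iff {x : Option (Node A)} :
    (chainTree A).Succ none x ↔ ∃ p : Node A, p.level = 0 ∧ x = some p := by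
  constructor
  · rintro ⟨hlt, hmin⟩
    rcases x with _ | p
    · exact (hlt : False).elim
    refine ⟨p, ?_, rfl⟩
    by_contra h
    exact hmin (some ⟨p.branch, 0, p.mem, Nat.zero_le _⟩) trivial ⟨rfl, Nat.pos_of_ne_zero h⟩
  · rintro ⟨p, hp, rfl⟩
    refine ⟨trivial, ?_⟩
    rintro (_ | q) hq ⟨-, hqp⟩
    exacts [hq, by omega]

theorem succ_some_of_level_lt (p : Node A) (h : p.level < p.branch) :
    (chainTree A).Succ (some p) (some ⟨p.branch, p.level + 1, p.mem, h⟩) := by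
  refine ⟨⟨rfl, Nat.lt_succ_self _⟩, ?_⟩
  rintro (_ | q) hpq hq
  · exact hpq
  · obtain ⟨-, h₁⟩ := hpq
    obtain ⟨-, h₂⟩ := hq
    dsimp only at h₂
    omega

theorem hasBranch_some : ∀ {j : ℕ} {p : Node A}, j ≤ p.branch - p.level →
    (chainTree A).HasBranch j (some p)
  | 0, _, _ => trivial
  | _ + 1, p, h => ⟨_, succ_some_of_level_lt p (by omega), hasBranch_some (by dsimp; omega)⟩

theorem heightLE_some (p : Node A) : (chainTree A).HeightLE p.branch (some p) :=
  heightLE_of_rank_le rank (fun _ _ h => rank_lt_of_lt h.1) (Nat.cast_le.2 (Nat.sub_le _ _))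

theorem not_treeEquiv_omega0_add_one {B : Set ℕ} {n : ℕ} (hA : n ∈ A) (hB : n ∉ B) :
    ¬ TreeEquiv (Ordinal.omega0 + 1) (chainTree A) (chainTree B) := by
  intro h
  rw [TreeEquiv] at h
  let p : Node A := ⟨n, 0, hA, Nat.zero_le n⟩
  obtain ⟨x, hx, hequiv⟩ :=
    (h Ordinal.omega0 (Order.lt_add_one_iff.2 le_rfl)).1 (some p) (succ_root_iff.2 ⟨p, rfl, rfl⟩)
  obtain ⟨q, hq, rfl⟩ := succ_root_iff.1 hx
  rcases lt_or_gt_of_ne (fun hqn => hB (hqn ▸ q.mem) : q.branch ≠ n) with hlt | hgt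
  · refine not_treeEquiv_of_hasBranch_of_heightLE ?_ (heightLE_some q).subtree
      (Ordinal.natCast_lt_omega0 _) hequiv
    exact (hasBranch_some (show q.branch + 1 ≤ n - 0 by omega)).subtree
  · refine not_treeEquiv_of_hasBranch_of_heightLE ?_ (heightLE_some p).subtree
      (Ordinal.natCast_lt_omega0 _) hequiv.symm
    exact (hasBranch_some (show n + 1 ≤ q.branch - q.level by omega)).subtree

end ChainTree

/-- there is a family `(T_A)_{A ⊆ ω}` of countable well-founded
trees such that distinct subsets of `ω` give `≈_{ω+1}`-inequivalent trees; in
particular there are at least `2^ℵ₀` pairwise `≈_{ω+1}`-inequivalent countable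
well-founded trees. -/
theorem exists_continuum_many_inequivalent_trees :
    ∃ T : Set ℕ → WFTree,
      (∀ A : Set ℕ, Cardinal.mk (T A).A ≤ Cardinal.aleph0) ∧
      ∀ A B : Set ℕ, A ≠ B → ¬ TreeEquiv (Ordinal.omega0 + 1) (T A) (T B) := by
  refine ⟨chainTree, fun A => Cardinal.mk_le_aleph0, fun A B hAB => ?_⟩
  obtain ⟨n, hn⟩ := Set.symmDiff_nonempty.2 hAB
  rcases Set.mem_symmDiff.1 hn with ⟨hA, hB⟩ | ⟨hB, hA⟩
  · exact ChainTree.not_treeEquiv_omega0_add_one hA hB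
  · exact fun h => ChainTree.not_treeEquiv_omega0_add_one hB hA h.symm
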